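/- Let l, m be natural numbers with l+m even, and let Q₈^Δ := {(A,A) : A ∈ Q₈} ⊂ SU(2)×SU(2) act on V_l⊗V_m by ρ_l⊗ρ_m. If (l+m)/2 is even, then the subspace of vectors fixed by every element of Q₈^Δ equals the complex span of the vectors z₀^{l−i}z₁^{i} ⊗ z₀^{m−a}z₁^{a} + z₀^{i}z₁^{l−i} ⊗ z₀^{a}z₁^{m−a} over all indices 0 ≤ i ≤ l, 0 ≤ a ≤ m with i+a even. If (l+m)/2 is odd, then the fixed subspace equals the complex span of the vectors z₀^{l−i}z₁^{i} ⊗ z₀^{m−a}z₁^{a} − z₀^{i}z₁^{l−i} ⊗ z₀^{a}z₁^{m−a} over all indices 0 ≤ i ≤ l, 0 ≤ a ≤ m with i+a odd. -/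

import Mathlib

/-!
The tensors `e_{i,a} = z₀^{l-i}z₁^i ⊗ z₀^{m-a}z₁^a` span `V_l ⊗ V_m`. The diagonal element
`D = diag(i, -i)` multiplies `e_{i,a}` by `i^{l+m} (-1)^{i+a} = ε (-1)^{i+a}`, where
`ε = (-1)^{(l+m)/2}`, and `J` sends it to `(-1)^{i+a} e_{l-i,m-a}`. As `-1` acts trivially
(`l + m` is even) and `K = DJ`, a vector of `V_l ⊗ V_m` is `Q₈`-invariant iff it is fixed by `D`
and `J`. Such a vector `w` equals `¼ (1 + J)(1 + D) w`, and `(1 + J)(1 + D)` kills `e_{i,a}`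
unless `(-1)^{i+a} = ε`, in which case it yields `2 (e_{i,a} + ε e_{l-i,m-a})`; conversely these
combinations are fixed by `D` and `J`.
-/

open MvPolynomial TensorProduct

noncomputable section

abbrev Mat2 : Type := Matrix (Fin 2) (Fin 2) ℂ

abbrev P2 : Type := MvPolynomial (Fin 2) ℂ

/-- The substitution action `(ρ(g) f)(z₀,z₁) = f((z₀,z₁)g)`. -/
def polyAct (g : Mat2) : P2 →ₗ[ℂ] P2 :=
  (MvPolynomial.aeval
    (fun j : Fin 2 => ∑ i : Fin 2, MvPolynomial.C (g i j) * MvPolynomial.X i) :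
      P2 →ₐ[ℂ] P2).toLinearMap

/-- The action ρ_l(A)⊗ρ_m(B) on V_l⊗V_m ⊆ P2 ⊗ P2. -/
def tAct (g h : Mat2) : P2 ⊗[ℂ] P2 →ₗ[ℂ] P2 ⊗[ℂ] P2 :=
  TensorProduct.map (polyAct g) (polyAct h)

def Dmat : Mat2 := !![Complex.I, 0; 0, -Complex.I]
def Jmat : Mat2 := !![0, 1; -1, 0]
def Kmat : Mat2 := !![0, Complex.I; Complex.I, 0]

/-- The quaternion subgroup Q₈ of SU(2). -/
def Q8 : Set Mat2 := {1, -1, Dmat, -Dmat, Jmat, -Jmat, Kmat, -Kmat}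

/-- The copy of V_l⊗V_m inside P2 ⊗ P2: the image of the tensor product of the
homogeneous components of degrees l and m. -/
def Vbideg (l m : ℕ) : Submodule ℂ (P2 ⊗[ℂ] P2) :=
  LinearMap.range (TensorProduct.map
    (MvPolynomial.homogeneousSubmodule (Fin 2) ℂ l).subtype
    (MvPolynomial.homogeneousSubmodule (Fin 2) ℂ m).subtype)

theorem MvPolynomial.homogeneousSubmodule_fin_two_eq_span {R : Type*} [CommSemiring R] (n : ℕ) :
    homogeneousSubmodule (Fin 2) R n =
      Submodule.span R {p | ∃ i ≤ n, p = X 0 ^ (n - i) * X 1 ^ i} := by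
  rw [homogeneousSubmodule_eq_finsupp_supported, AddMonoidAlgebra.supported_eq_span_single]
  congr 1
  ext p
  simp only [Set.mem_image, Set.mem_ofPred_eq]
  constructor
  · rintro ⟨d, hd, rfl⟩
    rw [Finsupp.degree_eq_sum, Fin.sum_univ_two] at hd
    refine ⟨d 1, by omega, ?_⟩
    rw [← hd, Nat.add_sub_cancel, X_pow_eq_monomial, X_pow_eq_monomial, monomial_mul, one_mul,
      single_eq_monomial]
    congr 2
    ext j
    fin_cases j <;> simp
  · rintro ⟨i, hi, rfl⟩
    refine ⟨Finsupp.single 0 (n - i) + Finsupp.single 1 i, ?_, ?_⟩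
    · simp [Finsupp.degree_eq_sum, Fin.sum_univ_two, hi]
    · simp [single_eq_monomial, X_pow_eq_monomial, monomial_mul]

def monoTmul (p q r s : ℕ) : P2 ⊗[ℂ] P2 :=
  (X 0 ^ p * X 1 ^ q : P2) ⊗ₜ[ℂ] (X 0 ^ r * X 1 ^ s : P2)

theorem Vbideg_eq_span (l m : ℕ) :
    Vbideg l m = Submodule.span ℂ
      {w | ∃ i ≤ l, ∃ a ≤ m, w = monoTmul (l - i) i (m - a) a} := by
  rw [Vbideg, ← TensorProduct.mapIncl, TensorProduct.range_mapIncl,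
    homogeneousSubmodule_fin_two_eq_span, homogeneousSubmodule_fin_two_eq_span,
    Submodule.map₂_span_span]
  congr 1
  ext w
  simp [monoTmul, eq_comm]

theorem polyAct_mul (g h : Mat2) : polyAct (g * h) = polyAct g ∘ₗ polyAct h := by
  refine LinearMap.ext fun f => ?_
  simp only [polyAct, AlgHom.toLinearMap_apply, LinearMap.comp_apply]
  rw [← AlgHom.comp_apply, MvPolynomial.comp_aeval]
  congr 2
  funext j
  simp [Matrix.mul_apply, Fin.sum_univ_two]
  ring

theorem polyAct_one : polyAct 1 = LinearMap.id := by
  have hX : (fun j : Fin 2 => ∑ i : Fin 2, C ((1 : Mat2) i j) * X i) = X := by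
    funext j; fin_cases j <;> simp [Matrix.one_apply]
  refine LinearMap.ext fun f => ?_
  simp only [polyAct, AlgHom.toLinearMap_apply, hX, aeval_X_left_apply, LinearMap.id_apply]

theorem tAct_one : tAct 1 1 = LinearMap.id := by
  rw [tAct, polyAct_one, TensorProduct.map_id]

theorem tAct_mul (g g' h h' : Mat2) : tAct (g * g') (h * h') = tAct g h ∘ₗ tAct g' h' := by
  simp only [tAct, polyAct_mul, TensorProduct.map_comp]

theorem polyAct_X_pow_mul_X_pow (g : Mat2) (p q : ℕ) :
    polyAct g (X 0 ^ p * X 1 ^ q : P2) =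
      (C (g 0 0) * X 0 + C (g 1 0) * X 1) ^ p * (C (g 0 1) * X 0 + C (g 1 1) * X 1) ^ q := by
  simp [polyAct, Fin.sum_univ_two]

theorem tAct_neg_one_monoTmul (p q r s : ℕ) :
    tAct (-1) (-1) (monoTmul p q r s) = ((-1 : ℂ) ^ (p + q + r + s)) • monoTmul p q r s := by
  have h (p q : ℕ) : polyAct (-1) (X 0 ^ p * X 1 ^ q : P2)
      = ((-1 : ℂ) ^ (p + q)) • (X 0 ^ p * X 1 ^ q) := by
    rw [polyAct_X_pow_mul_X_pow]; simp [smul_eq_C_mul, pow_add]; ring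
  simp only [tAct, monoTmul, TensorProduct.map_tmul, h, TensorProduct.smul_tmul_smul, pow_add]
  ring_nf

theorem tAct_Dmat_monoTmul (p q r s : ℕ) :
    tAct Dmat Dmat (monoTmul p q r s)
      = (Complex.I ^ (p + q + r + s) * (-1) ^ (q + s)) • monoTmul p q r s := by
  have h (p q : ℕ) : polyAct Dmat (X 0 ^ p * X 1 ^ q : P2)
      = (Complex.I ^ (p + q) * (-1) ^ q) • (X 0 ^ p * X 1 ^ q) := by
    rw [polyAct_X_pow_mul_X_pow]; simp [Dmat, smul_eq_C_mul, mul_pow, pow_add]; ring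
  simp only [tAct, monoTmul, TensorProduct.map_tmul, h, TensorProduct.smul_tmul_smul, pow_add]
  ring_nf

theorem tAct_Jmat_monoTmul (p q r s : ℕ) :
    tAct Jmat Jmat (monoTmul p q r s) = ((-1 : ℂ) ^ (p + r)) • monoTmul q p s r := by
  have h (p q : ℕ) : polyAct Jmat (X 0 ^ p * X 1 ^ q : P2)
      = ((-1 : ℂ) ^ p) • (X 0 ^ q * X 1 ^ p) := by
    rw [polyAct_X_pow_mul_X_pow]; simp [Jmat, smul_eq_C_mul]; ring
  simp only [tAct, monoTmul, TensorProduct.map_tmul, h, TensorProduct.smul_tmul_smul, pow_add]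

theorem Kmat_eq_Dmat_mul_Jmat : Kmat = Dmat * Jmat := by
  ext i j; fin_cases i <;> fin_cases j <;> simp [Kmat, Dmat, Jmat]

theorem Complex.I_pow_of_even {n : ℕ} (hn : Even n) : Complex.I ^ n = (-1) ^ (n / 2) := by
  obtain ⟨k, rfl⟩ := hn
  rw [← two_mul, pow_mul, Complex.I_sq, Nat.mul_div_cancel_left k two_pos]

theorem neg_one_pow_sub_add_sub {R : Type*} [Ring R] {l m i a : ℕ}
    (hlm : Even (l + m)) (hi : i ≤ l) (ha : a ≤ m) :
    (-1 : R) ^ (l - i + (m - a)) = (-1) ^ (i + a) := by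
  obtain ⟨k, hk⟩ := hlm
  rw [neg_one_pow_eq_pow_mod_two, neg_one_pow_eq_pow_mod_two (i + a)]
  congr 1
  omega

section Bidegree

variable {l m : ℕ}

theorem monoTmul_mem_Vbideg {p q r s : ℕ} (hl : p + q = l) (hm : r + s = m) :
    monoTmul p q r s ∈ Vbideg l m := by
  rw [Vbideg_eq_span]
  exact Submodule.subset_span ⟨q, by omega, s, by omega, by rw [← hl, ← hm]; simp⟩

theorem tAct_neg_one_of_mem_Vbideg (hlm : Even (l + m)) {w : P2 ⊗[ℂ] P2}
    (hw : w ∈ Vbideg l m) : tAct (-1) (-1) w = w := by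
  rw [Vbideg_eq_span] at hw
  refine LinearMap.eqOn_span' (g := LinearMap.id) ?_ hw
  rintro _ ⟨i, hi, a, ha, rfl⟩
  rw [tAct_neg_one_monoTmul, show l - i + i + (m - a) + a = l + m by omega, hlm.neg_one_pow,
    one_smul, LinearMap.id_apply]

theorem forall_Q8_tAct_eq_iff (hlm : Even (l + m)) {w : P2 ⊗[ℂ] P2} (hw : w ∈ Vbideg l m) :
    (∀ A ∈ Q8, tAct A A w = w) ↔ tAct Dmat Dmat w = w ∧ tAct Jmat Jmat w = w := by
  refine ⟨fun h => ⟨h Dmat (by simp [Q8]), h Jmat (by simp [Q8])⟩, fun ⟨hD, hJ⟩ => ?_⟩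
  have hK : tAct Kmat Kmat w = w := by
    rw [Kmat_eq_Dmat_mul_Jmat, tAct_mul, LinearMap.comp_apply, hJ, hD]
  have hneg (A : Mat2) (hA : tAct A A w = w) : tAct (-A) (-A) w = w := by
    rw [← mul_neg_one A, tAct_mul, LinearMap.comp_apply, tAct_neg_one_of_mem_Vbideg hlm hw, hA]
  have hone : tAct 1 1 w = w := by rw [tAct_one, LinearMap.id_apply]
  simp only [Q8, Set.mem_insert_iff, Set.mem_singleton_iff]
  rintro A (rfl | rfl | rfl | rfl | rfl | rfl | rfl | rfl)
  exacts [hone, hneg _ hone, hD, hneg _ hD, hJ, hneg _ hJ, hK, hneg _ hK]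

def fixedSubmodule (l m : ℕ) : Submodule ℂ (P2 ⊗[ℂ] P2) :=
  Vbideg l m ⊓ ⨅ A ∈ Q8, LinearMap.eqLocus (tAct A A) LinearMap.id

theorem coe_fixedSubmodule (l m : ℕ) :
    (fixedSubmodule l m : Set (P2 ⊗[ℂ] P2)) =
      {w | w ∈ Vbideg l m ∧ ∀ A ∈ Q8, tAct A A w = w} := by
  ext w
  simp [fixedSubmodule]

def invariantGenerators (l m : ℕ) : Set (P2 ⊗[ℂ] P2) :=
  {w | ∃ i a : ℕ, i ≤ l ∧ a ≤ m ∧ (-1 : ℂ) ^ (i + a) = (-1) ^ ((l + m) / 2) ∧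
    w = monoTmul (l - i) i (m - a) a + ((-1 : ℂ) ^ ((l + m) / 2)) • monoTmul i (l - i) a (m - a)}

/-- On `V_l ⊗ V_m` (`l + m` even) this is `4` times the averaging operator of `Q₈`. -/
def q8Average : P2 ⊗[ℂ] P2 →ₗ[ℂ] P2 ⊗[ℂ] P2 :=
  (LinearMap.id + tAct Jmat Jmat) ∘ₗ (LinearMap.id + tAct Dmat Dmat)

theorem q8Average_monoTmul_mem_span (hlm : Even (l + m)) {i a : ℕ} (hi : i ≤ l) (ha : a ≤ m) :
    q8Average (monoTmul (l - i) i (m - a) a) ∈ Submodule.span ℂ (invariantGenerators l m) := by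
  set ε : ℂ := (-1) ^ ((l + m) / 2)
  have hεε : ε * ε = 1 := by simp only [ε, ← mul_pow, neg_one_mul, neg_neg, one_pow]
  have hD : tAct Dmat Dmat (monoTmul (l - i) i (m - a) a)
      = (ε * (-1) ^ (i + a)) • monoTmul (l - i) i (m - a) a := by
    rw [tAct_Dmat_monoTmul, show l - i + i + (m - a) + a = l + m by omega,
      Complex.I_pow_of_even hlm]
  have hJ : tAct Jmat Jmat (monoTmul (l - i) i (m - a) a)
      = ((-1 : ℂ) ^ (i + a)) • monoTmul i (l - i) a (m - a) := by
    rw [tAct_Jmat_monoTmul, neg_one_pow_sub_add_sub hlm hi ha]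
  by_cases hsign : (-1 : ℂ) ^ (i + a) = ε
  · have havg : q8Average (monoTmul (l - i) i (m - a) a)
        = (2 : ℂ) • (monoTmul (l - i) i (m - a) a + ε • monoTmul i (l - i) a (m - a)) := by
      simp only [q8Average, LinearMap.comp_apply, LinearMap.add_apply, LinearMap.id_apply, hD,
        map_add, hJ, hsign, hεε, one_smul, two_smul]
    rw [havg]
    exact Submodule.smul_mem _ _ (Submodule.subset_span ⟨i, a, hi, ha, hsign, rfl⟩)
  · have hneg : (-1 : ℂ) ^ (i + a) = -ε := by
      rcases neg_one_pow_eq_or ℂ (i + a) with h | h <;>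
        rcases neg_one_pow_eq_or ℂ ((l + m) / 2) with h' | h' <;> simp_all [ε]
    have hvanish : (LinearMap.id + tAct Dmat Dmat : P2 ⊗[ℂ] P2 →ₗ[ℂ] P2 ⊗[ℂ] P2)
        (monoTmul (l - i) i (m - a) a) = 0 := by
      rw [LinearMap.add_apply, LinearMap.id_apply, hD, hneg, mul_neg, hεε]
      module
    rw [q8Average, LinearMap.comp_apply, hvanish, map_zero]
    exact Submodule.zero_mem _

theorem invariantGenerators_subset_fixedSubmodule (hlm : Even (l + m)) :
    invariantGenerators l m ⊆ fixedSubmodule l m := by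
  rintro _ ⟨i, a, hi, ha, hsign, rfl⟩
  set ε : ℂ := (-1) ^ ((l + m) / 2)
  have hεε : ε * ε = 1 := by simp only [ε, ← mul_pow, neg_one_mul, neg_neg, one_pow]
  have hmem : monoTmul (l - i) i (m - a) a + ε • monoTmul i (l - i) a (m - a) ∈ Vbideg l m :=
    add_mem (monoTmul_mem_Vbideg (by omega) (by omega))
      (Submodule.smul_mem _ _ (monoTmul_mem_Vbideg (by omega) (by omega)))
  rw [coe_fixedSubmodule]
  refine ⟨hmem, (forall_Q8_tAct_eq_iff hlm hmem).mpr ⟨?_, ?_⟩⟩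
  · rw [map_add, map_smul, tAct_Dmat_monoTmul, tAct_Dmat_monoTmul,
      show l - i + i + (m - a) + a = l + m by omega, show i + (l - i) + a + (m - a) = l + m by omega,
      Complex.I_pow_of_even hlm, neg_one_pow_sub_add_sub hlm hi ha, hsign, hεε, one_smul,
      one_smul]
  · rw [map_add, map_smul, tAct_Jmat_monoTmul, tAct_Jmat_monoTmul,
      neg_one_pow_sub_add_sub hlm hi ha, hsign, smul_smul, hεε, one_smul, add_comm]

theorem fixedSubmodule_eq_span (hlm : Even (l + m)) :
    fixedSubmodule l m = Submodule.span ℂ (invariantGenerators l m) := by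
  refine le_antisymm (fun w hw => ?_)
    (Submodule.span_le.mpr (invariantGenerators_subset_fixedSubmodule hlm))
  rw [← SetLike.mem_coe, coe_fixedSubmodule] at hw
  obtain ⟨hV, hfix⟩ := hw
  obtain ⟨hD, hJ⟩ := (forall_Q8_tAct_eq_iff hlm hV).mp hfix
  have hw : w = (4⁻¹ : ℂ) • q8Average w := by
    simp only [q8Average, LinearMap.comp_apply, LinearMap.add_apply, LinearMap.id_apply, hD,
      map_add, hJ]
    module
  rw [hw]
  refine Submodule.smul_mem _ _ ?_
  rw [Vbideg_eq_span] at hV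
  have hmap := Submodule.mem_map_of_mem (f := q8Average) hV
  rw [Submodule.map_span] at hmap
  refine Submodule.span_le.mpr ?_ hmap
  rintro _ ⟨_, ⟨i, hi, a, ha, rfl⟩, rfl⟩
  exact q8Average_monoTmul_mem_span hlm hi ha

end Bidegree

theorem statement2 (l m : ℕ) (hlm : Even (l + m)) :
    (Even ((l + m) / 2) →
      {w : P2 ⊗[ℂ] P2 | w ∈ Vbideg l m ∧ ∀ A ∈ Q8, tAct A A w = w}
        = ↑(Submodule.span ℂ
            {w : P2 ⊗[ℂ] P2 | ∃ i a : ℕ, i ≤ l ∧ a ≤ m ∧ Even (i + a) ∧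
              w = (X 0 ^ (l - i) * X 1 ^ i : P2) ⊗ₜ[ℂ] (X 0 ^ (m - a) * X 1 ^ a : P2)
                + (X 0 ^ i * X 1 ^ (l - i) : P2) ⊗ₜ[ℂ] (X 0 ^ a * X 1 ^ (m - a) : P2)})) ∧
    (Odd ((l + m) / 2) →
      {w : P2 ⊗[ℂ] P2 | w ∈ Vbideg l m ∧ ∀ A ∈ Q8, tAct A A w = w}
        = ↑(Submodule.span ℂ
            {w : P2 ⊗[ℂ] P2 | ∃ i a : ℕ, i ≤ l ∧ a ≤ m ∧ Odd (i + a) ∧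
              w = (X 0 ^ (l - i) * X 1 ^ i : P2) ⊗ₜ[ℂ] (X 0 ^ (m - a) * X 1 ^ a : P2)
                - (X 0 ^ i * X 1 ^ (l - i) : P2) ⊗ₜ[ℂ] (X 0 ^ a * X 1 ^ (m - a) : P2)})) := by
  have hne : (-1 : ℂ) ≠ 1 := by norm_num
  -- `neg_one_smul` does not rewrite here: it only matches the scalar action up to unfolding.
  have hsmul (x : P2 ⊗[ℂ] P2) : (-1 : ℂ) • x = -x := neg_one_smul ℂ x
  rw [← coe_fixedSubmodule, fixedSubmodule_eq_span hlm, invariantGenerators]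
  refine ⟨fun h => ?_, fun h => ?_⟩
  · simp only [h.neg_one_pow, neg_one_pow_eq_one_iff_even hne, one_smul, monoTmul]
  · simp only [h.neg_one_pow, neg_one_pow_eq_neg_one_iff_odd hne, hsmul, ← sub_eq_add_neg,
      monoTmul]
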